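/- Let b > 5 be real, set β := (b−1)/(5b+5), and let c > 2/β be real. For real a > 1 and q ∈ ℕ (q ≥ 0), define λ_q := 2 a^{−b/2} a^{c b^{q+1}}, δ_q := (a^b / (4(2π)³)) a^{−b^q}, ℓ_q := δ_{q+1}^{−1/8} δ_q^{1/8} λ_q^{−1/4} λ_{q+1}^{−3/4}, and μ_q := δ_{q+1}^{1/4} δ_q^{1/4} λ_q^{1/2} λ_{q+1}^{1/2}. Then there exists a₀ > 1 (depending only on b and c) such that for all a ≥ a₀ and all q ∈ ℕ the following hold: (i) δ_q^{1/2} λ_q ℓ_q < δ_{q+1}^{1/2}; (ii) δ_q^{1/2} λ_q / μ_q + 1/(ℓ_q λ_{q+1}) ≤ λ_{q+1}^{−β}; (iii) λ_{q+1}^{−β} < δ_{q+2} / δ_{q+1}; (iv) λ_{q+1}^{−1} ≤ δ_{q+1}^{1/2} / μ_q. -/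
import Mathlib


open Real

/-- The frequency parameter `λ_q = 2 a^{-b/2} a^{c b^{q+1}}` of the convex integration scheme. -/
noncomputable def lamCI (a b c : ℝ) (q : ℕ) : ℝ :=
  2 * a ^ (-(b / 2)) * a ^ (c * b ^ (q + 1))

/-- The amplitude parameter `δ_q = (a^b / (4(2π)³)) a^{-b^q}` of the convex integration scheme. -/
noncomputable def delCI (a b : ℝ) (q : ℕ) : ℝ :=
  (a ^ b / (4 * (2 * π) ^ 3)) * a ^ (-(b ^ q))

/-- The mollification scale `ℓ_q = δ_{q+1}^{-1/8} δ_q^{1/8} λ_q^{-1/4} λ_{q+1}^{-3/4}`. -/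
noncomputable def ellCI (a b c : ℝ) (q : ℕ) : ℝ :=
  delCI a b (q + 1) ^ (-(1 / 8 : ℝ)) * delCI a b q ^ ((1 / 8 : ℝ)) *
    lamCI a b c q ^ (-(1 / 4 : ℝ)) * lamCI a b c (q + 1) ^ (-(3 / 4 : ℝ))

/-- The time-cutoff scale `μ_q = δ_{q+1}^{1/4} δ_q^{1/4} λ_q^{1/2} λ_{q+1}^{1/2}`. -/
noncomputable def muCI (a b c : ℝ) (q : ℕ) : ℝ :=
  delCI a b (q + 1) ^ ((1 / 4 : ℝ)) * delCI a b q ^ ((1 / 4 : ℝ)) *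
    lamCI a b c q ^ ((1 / 2 : ℝ)) * lamCI a b c (q + 1) ^ ((1 / 2 : ℝ))

private lemma exp_rpow' (s r : ℝ) : exp s ^ r = exp (s * r) := by
  rw [Real.rpow_def_of_pos (Real.exp_pos s), Real.log_exp]

private lemma del_exp {a : ℝ} (ha : 0 < a) (b : ℝ) (q : ℕ) :
    delCI a b q = exp ((b - b ^ q) * log a - log (4 * (2 * π) ^ 3)) := by
  have hK : (0:ℝ) < 4 * (2 * π) ^ 3 := by positivity
  unfold delCI
  rw [Real.rpow_def_of_pos ha, Real.rpow_def_of_pos ha,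
    show exp (log a * b) / (4*(2*π)^3) * exp (log a * (-(b^q)))
      = exp (log a * b) * exp (log a * (-(b^q))) / exp (log (4*(2*π)^3)) by
        rw [Real.exp_log hK]; ring, ← Real.exp_add, ← Real.exp_sub]
  congr 1; ring

private lemma lam_exp {a : ℝ} (ha : 0 < a) (b c : ℝ) (q : ℕ) :
    lamCI a b c q = exp ((c * b ^ (q+1) - b / 2) * log a + log 2) := by
  unfold lamCI
  rw [Real.exp_add ((c * b ^ (q+1) - b / 2) * log a) (log 2), Real.exp_log two_pos,
    Real.rpow_def_of_pos ha, Real.rpow_def_of_pos ha, mul_assoc, ← Real.exp_add, mul_comm]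
  congr 1; ring

private lemma sum_exp_le {x y z : ℝ} (hx : x ≤ z - 2 * log 2) (hy : y ≤ z - 2 * log 2) :
    exp x + exp y ≤ exp z := by
  have h4 : exp (z - 2 * log 2) = exp z / 4 := by
    rw [Real.exp_sub, two_mul, Real.exp_add, Real.exp_log two_pos]; norm_num
  have h1 := Real.exp_le_exp.mpr hx
  have h2 := Real.exp_le_exp.mpr hy
  rw [h4] at h1 h2
  linarith [Real.exp_pos z]

set_option maxHeartbeats 4000000 in
/-- For `b > 5`, `β = (b-1)/(5b+5)` and `c > 2/β`, there is `a₀ > 1` such that for all `a ≥ a₀`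
and all `q ∈ ℕ` the key length-scale estimates of the convex integration scheme hold:
(i) `δ_q^{1/2} λ_q ℓ_q < δ_{q+1}^{1/2}`;
(ii) `δ_q^{1/2} λ_q / μ_q + 1/(ℓ_q λ_{q+1}) ≤ λ_{q+1}^{-β}`;
(iii) `λ_{q+1}^{-β} < δ_{q+2}/δ_{q+1}`;
(iv) `λ_{q+1}^{-1} ≤ δ_{q+1}^{1/2} / μ_q`. -/
theorem stmt_18 (b c : ℝ) (hb : 5 < b) (β : ℝ) (hβ : β = (b - 1) / (5 * b + 5))
    (hc : 2 / β < c) :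
    ∃ a₀ : ℝ, 1 < a₀ ∧ ∀ a : ℝ, a₀ ≤ a → ∀ q : ℕ,
      delCI a b q ^ ((1 : ℝ) / 2) * lamCI a b c q * ellCI a b c q <
          delCI a b (q + 1) ^ ((1 : ℝ) / 2) ∧
      delCI a b q ^ ((1 : ℝ) / 2) * lamCI a b c q / muCI a b c q +
          1 / (ellCI a b c q * lamCI a b c (q + 1)) ≤ lamCI a b c (q + 1) ^ (-β) ∧
      lamCI a b c (q + 1) ^ (-β) < delCI a b (q + 2) / delCI a b (q + 1) ∧
      (lamCI a b c (q + 1))⁻¹ ≤ delCI a b (q + 1) ^ ((1 : ℝ) / 2) / muCI a b c q := by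
  refine ⟨2, one_lt_two, fun a ha2 q => ?_⟩
  have ha : (0:ℝ) < a := by linarith
  have hb1 : (0:ℝ) < b - 1 := by linarith
  have hβpos : 0 < β := by rw [hβ]; apply div_pos hb1; linarith
  have hβ1 : β * (5*b+5) = b - 1 := by rw [hβ]; field_simp
  have hc10 : 10*(b+1) < c*(b-1) := by
    rw [hβ, div_div_eq_mul_div] at hc
    have := (div_lt_iff₀ hb1).mp hc
    linarith
  have hcβ : 2 < c * β := (div_lt_iff₀ hβpos).mp hc
  have hβ5 : β * 5 < 1 := by nlinarith
  have hβb : β * b * 5 ≤ b - 1 := by nlinarith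
  have hcb : (0:ℝ) < c := by nlinarith
  have ht : (1:ℝ) ≤ b ^ q := one_le_pow₀ (by linarith)
  have ht0 : (0:ℝ) ≤ b ^ q := by linarith
  have hLa : 0 < log a := Real.log_pos (by linarith)
  have hL2 : 0 < log 2 := Real.log_pos one_lt_two
  have hLaL2 : log 2 ≤ log a := Real.log_le_log two_pos ha2
  have hβL2 : β * log 2 < log 2 := by nlinarith
  -- key polynomial bounds on exponent gaps
  have A : β*c*(b*b)*b^q ≤ (b-1)*c*b*b^q/5 := by
    nlinarith [mul_le_mul_of_nonneg_right hβb
      (mul_nonneg (mul_nonneg hcb.le (by linarith : (0:ℝ) ≤ b)) ht0)]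
  have B : 10*(b+1)*(b*b^q) ≤ c*(b-1)*(b*b^q) :=
    mul_le_mul_of_nonneg_right hc10.le (mul_nonneg (by linarith) ht0)
  have C : (3*b*(b+1) - (b-1)/4) * 1 ≤ (3*b*(b+1) - (b-1)/4) * b^q :=
    mul_le_mul_of_nonneg_left ht (by nlinarith)
  have D : (3:ℝ) ≤ 3*b*(b+1) - (b-1)/4 := by nlinarith
  have hβbpos : (0:ℝ) ≤ β*b := mul_nonneg hβpos.le (by linarith)
  have hP1 : 3 ≤ b^q*(b-1)*(c*b)/2 - b^q*(b-1)/4 - β*c*(b*b)*b^q + β*b/2 := by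
    linarith [A, B, C, D, hβbpos]
  have C2 : (b*(b+1)/2 - (b-1)/8) * 1 ≤ (b*(b+1)/2 - (b-1)/8) * b^q :=
    mul_le_mul_of_nonneg_left ht (by nlinarith)
  have D2 : (3:ℝ) ≤ b*(b+1)/2 - (b-1)/8 + (b-1)/8 := by nlinarith
  have hP2 : 3 ≤ b^q*(b-1)/8 + b^q*(b-1)*(c*b)/4 - β*c*(b*b)*b^q + β*b/2 := by
    have htb : (0:ℝ) ≤ b^q*(b-1)/8 := by positivity
    linarith [A, B, C2, D2, hβbpos, htb]
  have F1 : 2*(b*b*b^q) ≤ c*β*(b*b*b^q) :=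
    mul_le_mul_of_nonneg_right hcβ.le
      (mul_nonneg (mul_nonneg (by linarith : (0:ℝ) ≤ b) (by linarith : (0:ℝ) ≤ b)) ht0)
  have F2 : b*(b+1)*1 ≤ b*(b+1)*b^q :=
    mul_le_mul_of_nonneg_left ht (by nlinarith)
  have F3 : (1:ℝ) ≤ b*(b+1) - (b-1)/10 := by nlinarith
  have hP3 : 1 ≤ β*c*(b*b)*b^q - b^q*b*(b-1) - β*b/2 := by
    linarith [F1, F2, F3, hβb]
  refine ⟨?_, ?_, ?_, ?_⟩
  · -- (i)
    simp only [ellCI, del_exp ha, lam_exp ha, exp_rpow', ← Real.exp_add]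
    rw [Real.exp_lt_exp]
    simp only [pow_succ]
    have key : (0:ℝ) < b ^ q * (b-1) * (3*c*b/4 - 5/8) * log a := by
      apply mul_pos (mul_pos (mul_pos (by positivity) hb1) (by nlinarith)) hLa
    nlinarith [key]
  · -- (ii)
    simp only [ellCI, muCI, del_exp ha, lam_exp ha, exp_rpow', ← Real.exp_add, one_div,
      ← Real.exp_neg, ← Real.exp_sub]
    refine sum_exp_le ?_ ?_
    · simp only [pow_succ]
      nlinarith [mul_le_mul_of_nonneg_right hP1 hLa.le, hβL2, hLaL2, hL2]
    · simp only [pow_succ]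
      nlinarith [mul_le_mul_of_nonneg_right hP2 hLa.le, hβL2, hLaL2, hL2]
  · -- (iii)
    simp only [del_exp ha, lam_exp ha, exp_rpow', ← Real.exp_sub]
    rw [Real.exp_lt_exp]
    simp only [pow_succ]
    nlinarith [mul_le_mul_of_nonneg_right hP3 hLa.le, hβL2, hLaL2, hL2]
  · -- (iv)
    simp only [muCI, del_exp ha, lam_exp ha, exp_rpow', ← Real.exp_add, ← Real.exp_neg,
      ← Real.exp_sub]
    rw [Real.exp_le_exp]
    simp only [pow_succ]
    have key : (0:ℝ) ≤ b ^ q * (b-1) * (c*b/2 - 1/4) * log a := by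
      apply mul_nonneg (mul_nonneg (mul_nonneg ht0 hb1.le) (by nlinarith)) hLa.le
    nlinarith [key]
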